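/- arXiv:2102.08806 — 3 statements merged into one kernel-verified Lean document; each statement's English description precedes it below -/
import Mathlib

section
/- Let n ≥ 2 and let γ : I → ℝⁿ be a smooth non-degenerate curve on a compact interval I, with Frenet frame (e₁(s), …, e_n(s)). Then there is a constant C = C(γ, n) such that for all indices 1 ≤ i, j ≤ n and all s₁, s₂ ∈ I one has |⟨e_i(s₁), e_j(s₂)⟩| ≤ C |s₁ − s₂|^{|i−j|} and |⟨γ^{(i)}(s₁), e_j(s₂)⟩| ≤ C |s₁ − s₂|^{max(j−i, 0)}. -/
open MeasureTheory Set
open scoped FourierTransform InnerProductSpace ENNReal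

noncomputable section

/-- Euclidean space ℝⁿ. -/
abbrev Euc (n : ℕ) := EuclideanSpace ℝ (Fin n)

/-- The averaging operator `A_γ f (x) = ∫ f(x - γ(s)) χ(s) ds`. -/
def avgOp {n : ℕ} (γ : ℝ → Euc n) (χ : ℝ → ℝ) (f : Euc n → ℂ) : Euc n → ℂ :=
  fun x => ∫ s : ℝ, f (x - γ s) * (χ s : ℂ)

/-- The `L^p` Sobolev norm `‖𝓕⁻¹[(1+|ξ|²)^{α/2} 𝓕 g]‖_{L^p}` of order `α`. -/
def sobolevNorm {n : ℕ} (p : ℝ≥0∞) (α : ℝ) (g : Euc n → ℂ) : ℝ≥0∞ :=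
  eLpNorm (𝓕⁻ (fun ξ : Euc n => (((1 + ‖ξ‖ ^ 2) ^ (α / 2) : ℝ) : ℂ) * 𝓕 g ξ)) p volume

/-- Non-degeneracy: `|det(γ'(s), …, γ⁽ⁿ⁾(s))| ≥ c₀ > 0` on `I`. -/
def NonDeg {n : ℕ} (γ : ℝ → Euc n) (I : Set ℝ) : Prop :=
  ∃ c₀ > (0 : ℝ), ∀ s ∈ I,
    c₀ ≤ |(Matrix.of fun i j : Fin n => iteratedDeriv ((j : ℕ) + 1) γ s i).det|

/-- The Frenet frame of `γ` at `s`: Gram–Schmidt applied to `(γ'(s), …, γ⁽ⁿ⁾(s))`;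
`frenet γ s i` is `e_{i+1}(s)`. -/
def frenet {n : ℕ} (γ : ℝ → Euc n) (s : ℝ) : Fin n → Euc n :=
  letI : WellFoundedLT (Fin n) := Finite.to_wellFoundedLT
  InnerProductSpace.gramSchmidtNormed ℝ (fun i : Fin n => iteratedDeriv ((i : ℕ) + 1) γ s)

/-!
As a function of `s`, `⟪γ⁽ⁱ⁾(s), e_j(s₂)⟫` vanishes to order `j - i` at `s₂`, since `e_j(s₂)` is
orthogonal to `γ'(s₂), …, γ⁽ʲ⁻¹⁾(s₂)`; Taylor's bound with a uniform bound on the derivatives of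
`γ` over the compact interval gives the second estimate. For the first, non-degeneracy and
Cramer's rule write `e_i(s₁)` as a combination of `γ'(s₁), …, γ⁽ⁱ⁾(s₁)` with uniformly bounded
coefficients, which reduces it to the second; the case `i > j` follows by symmetry.
-/

section Taylor

variable {E : Type*} [NormedAddCommGroup E] [NormedSpace ℝ E]

theorem norm_le_mul_pow_of_iteratedDeriv_eq_zero {m : ℕ} {f : ℝ → E} (hf : ContDiff ℝ m f)
    {s₁ s₂ D : ℝ} (hzero : ∀ k < m, iteratedDeriv k f s₂ = 0)
    (hD : ∀ t ∈ uIcc s₁ s₂, ‖iteratedDeriv m f t‖ ≤ D) :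
    ‖f s₁‖ ≤ D * |s₁ - s₂| ^ m := by
  induction m generalizing f s₁ with
  | zero => simpa using hD s₁ left_mem_uIcc
  | succ m ih =>
    rw [Nat.cast_succ] at hf
    obtain ⟨hdiff, -, hf'⟩ := contDiff_succ_iff_deriv.1 hf
    have hD0 : 0 ≤ D := (norm_nonneg _).trans (hD s₂ right_mem_uIcc)
    have hderiv : ∀ t ∈ uIcc s₁ s₂, ‖deriv f t‖ ≤ D * |s₁ - s₂| ^ m := fun t ht =>
      calc ‖deriv f t‖ ≤ D * |t - s₂| ^ m :=
            ih hf' (fun k hk => by simpa [iteratedDeriv_succ'] using hzero (k + 1) (by omega))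
              fun u hu => by
                simpa [iteratedDeriv_succ'] using hD u (uIcc_subset_uIcc ht right_mem_uIcc hu)
        _ ≤ D * |s₁ - s₂| ^ m := by
            gcongr _ * ?_ ^ _
            exact abs_sub_left_of_mem_uIcc (uIcc_comm s₁ s₂ ▸ ht)
    have hmvt := (convex_uIcc s₁ s₂).norm_image_sub_le_of_norm_deriv_le (fun t _ => hdiff t)
      hderiv right_mem_uIcc left_mem_uIcc
    rw [show f s₂ = 0 from hzero 0 m.succ_pos, sub_zero, Real.norm_eq_abs] at hmvt
    rwa [pow_succ, ← mul_assoc]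

end Taylor

section InnerProduct

variable {E : Type*} [NormedAddCommGroup E] [InnerProductSpace ℝ E]

theorem iteratedDeriv_inner_const_right {k : ℕ} {f : ℝ → E} (hf : ContDiff ℝ k f) (w : E)
    (s : ℝ) : iteratedDeriv k (fun t => ⟪f t, w⟫_ℝ) s = ⟪iteratedDeriv k f s, w⟫_ℝ := by
  have h := (innerSL ℝ w).iteratedFDeriv_comp_left (hf.contDiffAt (x := s)) le_rfl
  simp only [coe_innerSL_apply, Function.comp_def] at h
  simp only [iteratedDeriv_eq_iteratedFDeriv, real_inner_comm, h,
    ContinuousLinearMap.compContinuousMultilinearMap_coe, coe_innerSL_apply, Function.comp_apply]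

theorem abs_inner_le_mul_pow_of_inner_iteratedDeriv_eq_zero {m : ℕ} {f : ℝ → E}
    (hf : ContDiff ℝ m f) {w : E} (hw : ‖w‖ ≤ 1) {s₁ s₂ D : ℝ}
    (horth : ∀ k < m, ⟪iteratedDeriv k f s₂, w⟫_ℝ = 0)
    (hD : ∀ t ∈ uIcc s₁ s₂, ‖iteratedDeriv m f t‖ ≤ D) :
    |⟪f s₁, w⟫_ℝ| ≤ D * |s₁ - s₂| ^ m := by
  have hg : ContDiff ℝ m fun t => ⟪f t, w⟫_ℝ := hf.inner ℝ contDiff_const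
  refine norm_le_mul_pow_of_iteratedDeriv_eq_zero hg (fun k hk => ?_) fun t ht => ?_
  · rw [iteratedDeriv_inner_const_right (hf.of_le (by exact_mod_cast hk.le)), horth k hk]
  · rw [iteratedDeriv_inner_const_right hf, Real.norm_eq_abs]
    exact (abs_real_inner_le_norm _ _).trans
      ((mul_le_of_le_one_right (norm_nonneg _) hw).trans (hD t ht))

end InnerProduct

namespace InnerProductSpace

variable {𝕜 E ι : Type*} [RCLike 𝕜] [NormedAddCommGroup E] [InnerProductSpace 𝕜 E]
  [LinearOrder ι] [LocallyFiniteOrderBot ι] [WellFoundedLT ι]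

theorem norm_gramSchmidtNormed_le_one (f : ι → E) (i : ι) : ‖gramSchmidtNormed 𝕜 f i‖ ≤ 1 := by
  by_cases h : gramSchmidtNormed 𝕜 f i = 0
  · simp [h]
  · exact (gramSchmidtNormed_unit_length' h).le

theorem inner_gramSchmidtNormed_eq_zero_of_lt (f : ι → E) {i j : ι} (hij : i < j) :
    inner 𝕜 (f i) (gramSchmidtNormed 𝕜 f j) = 0 := by
  rw [gramSchmidtNormed, inner_smul_right,
    inner_eq_zero_symm.1 (gramSchmidt_inv_triangular 𝕜 f hij), mul_zero]

theorem gramSchmidtNormed_mem_span (f : ι → E) (i : ι) :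
    gramSchmidtNormed 𝕜 f i ∈ Submodule.span 𝕜 (f '' Iic i) :=
  Submodule.smul_mem _ _ (gramSchmidt_mem_span 𝕜 f le_rfl)

end InnerProductSpace

namespace Matrix

theorem abs_le_of_mulVec_eq {ι : Type*} [Fintype ι] [DecidableEq ι] {M : Matrix ι ι ℝ}
    {c w : ι → ℝ} (h : M *ᵥ c = w) {c₀ B : ℝ} (hc₀ : 0 < c₀) (hdet : c₀ ≤ |M.det|)
    (hM : ∀ r t, |M r t| ≤ B) (hw : ∀ r, |w r| ≤ B) (k : ι) :
    |c k| ≤ c₀⁻¹ * ((Fintype.card ι).factorial * B ^ Fintype.card ι) := by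
  have hcramer : M.det * c k = (M.updateCol k w).det := by
    rw [← cramer_apply, ← h, cramer_eq_adjugate_mulVec, mulVec_mulVec, adjugate_mul, smul_mulVec,
      one_mulVec, Pi.smul_apply, smul_eq_mul]
  have hbound : |(M.updateCol k w).det| ≤ (Fintype.card ι).factorial * B ^ Fintype.card ι := by
    have := det_le (abv := AbsoluteValue.abs) (x := B) (A := M.updateCol k w) fun r t => by
      rw [updateCol_apply]; split_ifs
      exacts [hw r, hM r t]
    simpa using this
  have hdet₀ : 0 < |M.det| := hc₀.trans_le hdet
  calc |c k| = |M.det|⁻¹ * |(M.updateCol k w).det| := by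
        rw [← hcramer, abs_mul, inv_mul_cancel_left₀ hdet₀.ne']
    _ ≤ c₀⁻¹ * ((Fintype.card ι).factorial * B ^ Fintype.card ι) :=
        mul_le_mul (inv_anti₀ hc₀ hdet) hbound (abs_nonneg _) (inv_nonneg.2 hc₀.le)

end Matrix

theorem EuclideanSpace.abs_apply_le_norm {ι : Type*} [Fintype ι] (x : EuclideanSpace ℝ ι)
    (r : ι) : |x r| ≤ ‖x‖ :=
  Real.norm_eq_abs (x r) ▸ PiLp.norm_apply_le x r

open InnerProductSpace in
theorem EuclideanSpace.exists_gramSchmidtNormed_eq_sum {ι : Type*} [Fintype ι] [LinearOrder ι]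
    [LocallyFiniteOrderBot ι] [WellFoundedLT ι] {v : ι → EuclideanSpace ℝ ι} {c₀ B : ℝ}
    (hc₀ : 0 < c₀) (hdet : c₀ ≤ |(Matrix.of fun r k => v k r).det|) (hB : 1 ≤ B)
    (hv : ∀ k, ‖v k‖ ≤ B) (i : ι) :
    ∃ c : ι → ℝ, (∀ k, i < k → c k = 0) ∧
      (∀ k, |c k| ≤ c₀⁻¹ * ((Fintype.card ι).factorial * B ^ Fintype.card ι)) ∧
      gramSchmidtNormed ℝ v i = ∑ k, c k • v k := by
  obtain ⟨l, hl, hsum⟩ :=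
    (Finsupp.mem_span_image_iff_linearCombination ℝ).1 (gramSchmidtNormed_mem_span v i)
  rw [Finsupp.linearCombination_apply, Finsupp.sum_fintype _ _ (by simp)] at hsum
  refine ⟨l, fun k hk => Finsupp.notMem_support_iff.1 fun hlk => (hl hlk).not_gt hk,
    fun k => Matrix.abs_le_of_mulVec_eq (w := fun r => gramSchmidtNormed ℝ v i r) ?_ hc₀ hdet
      (fun r t => (abs_apply_le_norm (v t) r).trans (hv t))
      (fun r => (abs_apply_le_norm _ r).trans ((norm_gramSchmidtNormed_le_one v i).trans hB)) k,
    hsum.symm⟩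
  ext r
  simp [← hsum, Matrix.mulVec, dotProduct, mul_comm]

theorem IsCompact.exists_bound_iteratedDeriv {E : Type*} [NormedAddCommGroup E]
    [NormedSpace ℝ E] {f : ℝ → E} {N : ℕ} (hf : ContDiff ℝ N f) {K : Set ℝ} (hK : IsCompact K) :
    ∃ B, 1 ≤ B ∧ ∀ m ≤ N, ∀ s ∈ K, ‖iteratedDeriv m f s‖ ≤ B := by
  have hcont : Continuous fun s => ∑ m ∈ Finset.range (N + 1), ‖iteratedDeriv m f s‖ :=
    continuous_finsetSum _ fun m hm =>
      (hf.continuous_iteratedDeriv m (by exact_mod_cast Finset.mem_range_succ_iff.1 hm)).norm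
  obtain ⟨B, hB⟩ := hK.exists_bound_of_continuousOn hcont.continuousOn
  refine ⟨max B 1, le_max_right _ _, fun m hm s hs => ?_⟩
  calc ‖iteratedDeriv m f s‖ ≤ ∑ m ∈ Finset.range (N + 1), ‖iteratedDeriv m f s‖ :=
        Finset.single_le_sum (f := fun m => ‖iteratedDeriv m f s‖) (fun _ _ => norm_nonneg _)
          (Finset.mem_range_succ_iff.2 hm)
    _ ≤ B := (Real.le_norm_self _).trans (hB s hs)
    _ ≤ max B 1 := le_max_left _ _

section Frenet

variable {n : ℕ} {γ : ℝ → Euc n}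

theorem norm_frenet_le_one (γ : ℝ → Euc n) (s : ℝ) (j : Fin n) : ‖frenet γ s j‖ ≤ 1 :=
  InnerProductSpace.norm_gramSchmidtNormed_le_one _ j

theorem inner_iteratedDeriv_frenet_eq_zero (γ : ℝ → Euc n) (s : ℝ) {k j : Fin n} (hkj : k < j) :
    ⟪iteratedDeriv ((k : ℕ) + 1) γ s, frenet γ s j⟫_ℝ = 0 :=
  InnerProductSpace.inner_gramSchmidtNormed_eq_zero_of_lt
    (fun i : Fin n => iteratedDeriv ((i : ℕ) + 1) γ s) hkj

theorem exists_frenet_eq_sum {c₀ B s : ℝ} (hc₀ : 0 < c₀)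
    (hdet : c₀ ≤ |(Matrix.of fun r k : Fin n => iteratedDeriv ((k : ℕ) + 1) γ s r).det|)
    (hB1 : 1 ≤ B) (hv : ∀ k : Fin n, ‖iteratedDeriv ((k : ℕ) + 1) γ s‖ ≤ B) (i : Fin n) :
    ∃ c : Fin n → ℝ, (∀ k, i < k → c k = 0) ∧ (∀ k, |c k| ≤ c₀⁻¹ * (n.factorial * B ^ n)) ∧
      frenet γ s i = ∑ k, c k • iteratedDeriv ((k : ℕ) + 1) γ s := by
  simpa [frenet] using EuclideanSpace.exists_gramSchmidtNormed_eq_sum hc₀ hdet hB1 hv i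

variable {a b B : ℝ} (hγ : ContDiff ℝ (⊤ : ℕ∞) γ)
  (hB : ∀ m ≤ n, ∀ s ∈ Icc a b, ‖iteratedDeriv m γ s‖ ≤ B)
include hγ hB

theorem abs_inner_iteratedDeriv_frenet_le {i j : Fin n} {m : ℕ} (him : m ≤ (j : ℕ) - i)
    {s₁ s₂ : ℝ} (hs₁ : s₁ ∈ Icc a b) (hs₂ : s₂ ∈ Icc a b) :
    |⟪iteratedDeriv ((i : ℕ) + 1) γ s₁, frenet γ s₂ j⟫_ℝ| ≤ B * |s₁ - s₂| ^ m := by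
  have hderiv (k : ℕ) : iteratedDeriv k (iteratedDeriv ((i : ℕ) + 1) γ) =
      iteratedDeriv ((i : ℕ) + k + 1) γ := by
    simp only [iteratedDeriv_eq_iterate, ← Function.iterate_add_apply]
    congr 1; omega
  refine abs_inner_le_mul_pow_of_inner_iteratedDeriv_eq_zero ?_ (norm_frenet_le_one γ s₂ j)
    (fun k hk => ?_) fun t ht => ?_
  · rw [iteratedDeriv_eq_iterate]
    exact (hγ.iterate_deriv _).of_le (by exact_mod_cast le_top)
  · rw [hderiv]
    exact inner_iteratedDeriv_frenet_eq_zero γ s₂ (k := ⟨(i : ℕ) + k, by omega⟩)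
      (Fin.mk_lt_of_lt_val (by omega))
  · rw [hderiv]
    exact hB _ (by omega) t (uIcc_subset_Icc hs₁ hs₂ ht)

theorem abs_inner_frenet_frenet_le {c₀ : ℝ} (hc₀ : 0 < c₀) (hB1 : 1 ≤ B) {i j : Fin n}
    (hij : i ≤ j) {s₁ s₂ : ℝ} (hs₁ : s₁ ∈ Icc a b) (hs₂ : s₂ ∈ Icc a b)
    (hdet : c₀ ≤ |(Matrix.of fun r k : Fin n => iteratedDeriv ((k : ℕ) + 1) γ s₁ r).det|) :
    |⟪frenet γ s₁ i, frenet γ s₂ j⟫_ℝ| ≤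
      n * (c₀⁻¹ * (n.factorial * B ^ n)) * B * |s₁ - s₂| ^ ((j : ℕ) - i) := by
  obtain ⟨c, hc_zero, hc_bound, hsum⟩ :=
    exists_frenet_eq_sum hc₀ hdet hB1 (fun k => hB _ k.isLt s₁ hs₁) i
  have hterm (k : Fin n) : |⟪c k • iteratedDeriv ((k : ℕ) + 1) γ s₁, frenet γ s₂ j⟫_ℝ| ≤
      c₀⁻¹ * (n.factorial * B ^ n) * (B * |s₁ - s₂| ^ ((j : ℕ) - i)) := by
    rw [real_inner_smul_left, abs_mul]
    rcases lt_or_ge i k with hik | hki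
    · rw [hc_zero k hik, abs_zero, zero_mul]
      positivity
    · exact mul_le_mul (hc_bound k) (abs_inner_iteratedDeriv_frenet_le hγ hB (by omega) hs₁ hs₂)
        (abs_nonneg _) (by positivity)
  calc |⟪frenet γ s₁ i, frenet γ s₂ j⟫_ℝ|
      = |∑ k, ⟪c k • iteratedDeriv ((k : ℕ) + 1) γ s₁, frenet γ s₂ j⟫_ℝ| := by
        rw [hsum, sum_inner]
    _ ≤ ∑ k, |⟪c k • iteratedDeriv ((k : ℕ) + 1) γ s₁, frenet γ s₂ j⟫_ℝ| :=
        Finset.abs_sum_le_sum_abs _ _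
    _ ≤ ∑ _k : Fin n, c₀⁻¹ * (n.factorial * B ^ n) * (B * |s₁ - s₂| ^ ((j : ℕ) - i)) :=
        Finset.sum_le_sum fun k _ => hterm k
    _ = n * (c₀⁻¹ * (n.factorial * B ^ n)) * B * |s₁ - s₂| ^ ((j : ℕ) - i) := by
        rw [Finset.sum_const, Finset.card_univ, Fintype.card_fin, nsmul_eq_mul]
        ring

end Frenet

theorem statement9_general (n : ℕ) (a b : ℝ)
    (γ : ℝ → Euc n) (hγ : ContDiff ℝ (⊤ : ℕ∞) γ)
    (hnd : NonDeg γ (Set.Icc a b)) :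
    ∃ C : ℝ, 0 < C ∧ ∀ i j : Fin n, ∀ s₁ ∈ Set.Icc a b, ∀ s₂ ∈ Set.Icc a b,
      |⟪frenet γ s₁ i, frenet γ s₂ j⟫_ℝ| ≤ C * |s₁ - s₂| ^ (((i : ℤ) - (j : ℤ)).natAbs) ∧
      |⟪iteratedDeriv ((i : ℕ) + 1) γ s₁, frenet γ s₂ j⟫_ℝ| ≤
        C * |s₁ - s₂| ^ ((j : ℕ) - (i : ℕ)) := by
  obtain ⟨c₀, hc₀, hdet⟩ := hnd
  obtain ⟨B, hB1, hB⟩ := (isCompact_Icc (a := a) (b := b)).exists_bound_iteratedDeriv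
    (hγ.of_le (by exact_mod_cast le_top) : ContDiff ℝ n γ)
  set K := n * (c₀⁻¹ * (n.factorial * B ^ n)) * B
  have hK : 0 ≤ K := by positivity
  refine ⟨K + B, by positivity, fun i j s₁ hs₁ s₂ hs₂ => ⟨?_, ?_⟩⟩
  · rcases le_total i j with hij | hji
    · rw [show ((i : ℤ) - j).natAbs = (j : ℕ) - i by omega]
      exact (abs_inner_frenet_frenet_le hγ hB hc₀ hB1 hij hs₁ hs₂ (hdet s₁ hs₁)).trans
        (by gcongr; linarith)
    · rw [show ((i : ℤ) - j).natAbs = (i : ℕ) - j by omega, real_inner_comm, abs_sub_comm]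
      exact (abs_inner_frenet_frenet_le hγ hB hc₀ hB1 hji hs₂ hs₁ (hdet s₂ hs₂)).trans
        (by gcongr; linarith)
  · exact (abs_inner_iteratedDeriv_frenet_le hγ hB le_rfl hs₁ hs₂).trans
      (by gcongr; linarith)

/-- Frenet frame bounds `|⟨e_i(s₁), e_j(s₂)⟩| ≲ |s₁ − s₂|^{|i−j|}` and
`|⟨γ⁽ⁱ⁾(s₁), e_j(s₂)⟩| ≲ |s₁ − s₂|^{max(j−i,0)}`.  Here the index `i : Fin n`
corresponds to the (1-based) index `i+1`. -/
theorem statement9 (n : ℕ) (hn : 2 ≤ n) (a b : ℝ) (hab : a < b)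
    (γ : ℝ → Euc n) (hγ : ContDiff ℝ (⊤ : ℕ∞) γ)
    (hnd : NonDeg γ (Set.Icc a b)) :
    ∃ C : ℝ, 0 < C ∧ ∀ i j : Fin n, ∀ s₁ ∈ Set.Icc a b, ∀ s₂ ∈ Set.Icc a b,
      |⟪frenet γ s₁ i, frenet γ s₂ j⟫_ℝ| ≤ C * |s₁ - s₂| ^ (((i : ℤ) - (j : ℤ)).natAbs) ∧
      |⟪iteratedDeriv ((i : ℕ) + 1) γ s₁, frenet γ s₂ j⟫_ℝ| ≤
        C * |s₁ - s₂| ^ ((j : ℕ) - (i : ℕ)) :=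
  statement9_general n a b γ hγ hnd
end
end

section
/- There is an absolute constant δ* ∈ (0,1) such that for every 0 < δ₀ ≤ δ* the following holds. Let γ ∈ 𝔊₄(δ₀) and let ξ ∈ ℝ⁴∖{0} be admissible for γ with parameter δ₀. Then the equation ⟨γ^{(3)}(s), ξ⟩ = 0 has a unique solution θ₂(ξ) in [−1,1]; this θ₂(ξ) is the unique point at which the function s ↦ ⟨γ''(s), ξ⟩ attains its global minimum over [−1,1]; and |θ₂(ξ)| ≤ C δ₀ for an absolute constant C. -/
open MeasureTheory Set
open scoped FourierTransform InnerProductSpace ENNReal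

noncomputable section

/-- The moment curve `γ∘(s) = (s, s²/2!, …, sⁿ/n!)`. -/
def momentCurve (n : ℕ) (s : ℝ) : Euc n :=
  WithLp.toLp 2 (fun i : Fin n => s ^ ((i : ℕ) + 1) / (Nat.factorial ((i : ℕ) + 1) : ℝ))

/-- The class `𝔊_n(δ)` of model curves: smooth `γ : [−1,1] → ℝⁿ` with `γ(0) = 0`,
`γ⁽ʲ⁾(0) = e_j` for `1 ≤ j ≤ n`, and `‖γ − γ∘‖_{C^{n+1}([−1,1])} ≤ δ`. -/
def InG (n : ℕ) (δ : ℝ) (γ : ℝ → Euc n) : Prop :=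
  ContDiff ℝ (⊤ : ℕ∞) γ ∧ γ 0 = 0 ∧
  (∀ i : Fin n, iteratedDeriv ((i : ℕ) + 1) γ 0 = EuclideanSpace.single i 1) ∧
  ∀ j : ℕ, 1 ≤ j → j ≤ n + 1 → ∀ s ∈ Set.Icc (-1 : ℝ) 1,
    ‖iteratedDeriv j γ s - iteratedDeriv j (momentCurve n) s‖ ≤ δ

/-- `ξ` is admissible for `γ` with parameter `δ₀`: with `I₀ = [−δ₀, δ₀]`,
`⟨γ⁽⁴⁾(s), ξ⟩ ≥ (9/10)|ξ|` on `I₀`, `⟨γ⁽⁴⁾(s), ξ⟩ ≥ (1/2)|ξ|` on `[−1,1]`, and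
`|⟨γ⁽ʲ⁾(s), ξ⟩| ≤ 8δ₀|ξ|` for `j = 1, 2, 3` on `I₀`. -/
def Admissible (δ₀ : ℝ) (γ : ℝ → Euc 4) (ξ : Euc 4) : Prop :=
  (∀ s ∈ Set.Icc (-δ₀) δ₀, (9 / 10) * ‖ξ‖ ≤ ⟪iteratedDeriv 4 γ s, ξ⟫_ℝ) ∧
  (∀ s ∈ Set.Icc (-1 : ℝ) 1, (1 / 2) * ‖ξ‖ ≤ ⟪iteratedDeriv 4 γ s, ξ⟫_ℝ) ∧
  (∀ j : ℕ, 1 ≤ j → j ≤ 3 → ∀ s ∈ Set.Icc (-δ₀) δ₀,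
    |⟪iteratedDeriv j γ s, ξ⟫_ℝ| ≤ 8 * δ₀ * ‖ξ‖)

/-!
The function `g = ⟨γ⁽³⁾(·), ξ⟩` has derivative `⟨γ⁽⁴⁾(·), ξ⟩ ≥ |ξ|/2` on `[−1,1]`, so it is strictly
increasing there, while `|g 0| ≤ 8δ₀|ξ|` is small. Hence `g` changes sign on `[−1,1]` and has
exactly one zero `θ`, at distance at most `|g 0| / (|ξ|/2) ≤ 16δ₀` from `0`. Since `g` is the
derivative of `⟨γ''(·), ξ⟩`, the latter decreases strictly on `[−1, θ]` and increases strictly on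
`[θ, 1]`, so `θ` is its unique minimiser.
-/

theorem hasDerivAt_inner_iteratedDeriv {E : Type*} [NormedAddCommGroup E]
    [InnerProductSpace ℝ E] {γ : ℝ → E} {n : ℕ} (hγ : ContDiff ℝ (n + 1) γ) (ξ : E) (x : ℝ) :
    HasDerivAt (fun t => ⟪iteratedDeriv n γ t, ξ⟫_ℝ) ⟪iteratedDeriv (n + 1) γ x, ξ⟫_ℝ x := by
  have h : HasDerivAt (iteratedDeriv n γ) (iteratedDeriv (n + 1) γ x) x := by
    rw [iteratedDeriv_succ]
    exact (hγ.differentiable_iteratedDeriv' n x).hasDerivAt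
  simpa using h.inner ℝ (hasDerivAt_const x ξ)

section DerivBounds

variable {f f' : ℝ → ℝ} {a b : ℝ}

theorem mul_sub_le_sub_of_le_hasDerivAt {m : ℝ} (hf : ∀ x ∈ Icc a b, HasDerivAt f (f' x) x)
    (hm : ∀ x ∈ Icc a b, m ≤ f' x) {x y : ℝ} (hx : x ∈ Icc a b) (hy : y ∈ Icc a b)
    (hxy : x ≤ y) : m * (y - x) ≤ f y - f x :=
  (convex_Icc a b).mul_sub_le_image_sub_of_le_deriv
    (fun z hz => (hf z hz).continuousAt.continuousWithinAt)
    (fun z hz => (hf z (interior_subset hz)).differentiableAt.differentiableWithinAt)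
    (fun z hz => (hf z (interior_subset hz)).deriv ▸ hm z (interior_subset hz)) x hx y hy hxy

theorem mul_abs_sub_le_abs_sub_of_le_hasDerivAt {m : ℝ}
    (hf : ∀ x ∈ Icc a b, HasDerivAt f (f' x) x) (hm : ∀ x ∈ Icc a b, m ≤ f' x) {x y : ℝ}
    (hx : x ∈ Icc a b) (hy : y ∈ Icc a b) : m * |y - x| ≤ |f y - f x| := by
  rcases le_total x y with hxy | hyx
  · calc m * |y - x| = m * (y - x) := by rw [abs_of_nonneg (sub_nonneg.2 hxy)]
      _ ≤ f y - f x := mul_sub_le_sub_of_le_hasDerivAt hf hm hx hy hxy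
      _ ≤ |f y - f x| := le_abs_self _
  · calc m * |y - x| = m * (x - y) := by rw [abs_sub_comm, abs_of_nonneg (sub_nonneg.2 hyx)]
      _ ≤ f x - f y := mul_sub_le_sub_of_le_hasDerivAt hf hm hy hx hyx
      _ ≤ |f y - f x| := by rw [abs_sub_comm]; exact le_abs_self _

theorem strictMonoOn_of_pos_hasDerivAt (hf : ∀ x ∈ Icc a b, HasDerivAt f (f' x) x)
    (hpos : ∀ x ∈ Icc a b, 0 < f' x) : StrictMonoOn f (Icc a b) :=
  strictMonoOn_of_deriv_pos (convex_Icc a b)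
    (fun z hz => (hf z hz).continuousAt.continuousWithinAt)
    (fun z hz => (hf z (interior_subset hz)).deriv ▸ hpos z (interior_subset hz))

theorem StrictMonoOn.existsUnique_eq_of_mem_Icc (hmono : StrictMonoOn f (Icc a b))
    (hcont : ContinuousOn f (Icc a b)) (hab : a ≤ b) {c : ℝ} (hc : c ∈ Icc (f a) (f b)) :
    ∃! s, s ∈ Icc a b ∧ f s = c := by
  obtain ⟨s, hs, hfs⟩ := intermediate_value_Icc hab hcont hc
  exact ⟨s, ⟨hs, hfs⟩, fun t ⟨ht, hft⟩ => hmono.injOn ht hs (hft.trans hfs.symm)⟩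

theorem lt_of_hasDerivAt_of_strictMonoOn {θ : ℝ} (hf : ∀ x ∈ Icc a b, HasDerivAt f (f' x) x)
    (hmono : StrictMonoOn f' (Icc a b)) (hθ : θ ∈ Icc a b) (hf'θ : f' θ = 0) :
    ∀ t ∈ Icc a b, t ≠ θ → f θ < f t := by
  have hleft : Icc a θ ⊆ Icc a b := Icc_subset_Icc_right hθ.2
  have hright : Icc θ b ⊆ Icc a b := Icc_subset_Icc_left hθ.1
  have hanti : StrictAntiOn f (Icc a θ) := by
    refine strictAntiOn_of_deriv_neg (convex_Icc a θ)
      (fun z hz => (hf z (hleft hz)).continuousAt.continuousWithinAt) fun z hz => ?_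
    rw [interior_Icc] at hz
    rw [(hf z (hleft (Ioo_subset_Icc_self hz))).deriv, ← hf'θ]
    exact hmono (hleft (Ioo_subset_Icc_self hz)) hθ hz.2
  have hmono' : StrictMonoOn f (Icc θ b) := by
    refine strictMonoOn_of_deriv_pos (convex_Icc θ b)
      (fun z hz => (hf z (hright hz)).continuousAt.continuousWithinAt) fun z hz => ?_
    rw [interior_Icc] at hz
    rw [(hf z (hright (Ioo_subset_Icc_self hz))).deriv, ← hf'θ]
    exact hmono hθ (hright (Ioo_subset_Icc_self hz)) hz.1
  intro t ht htθ
  rcases htθ.lt_or_gt with htlt | hθlt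
  · exact hanti ⟨ht.1, htlt.le⟩ ⟨hθ.1, le_rfl⟩ htlt
  · exact hmono' ⟨le_rfl, hθ.2⟩ ⟨hθlt.le, ht.2⟩ hθlt

end DerivBounds

/-- existence, uniqueness, minimality and size of the root `θ₂(ξ)` of
`⟨γ⁽³⁾(·), ξ⟩` on `[−1,1]` for admissible `ξ`. -/
theorem statement11 :
    ∃ δs : ℝ, 0 < δs ∧ δs < 1 ∧ ∃ C : ℝ, 0 < C ∧
    ∀ δ₀ : ℝ, 0 < δ₀ → δ₀ ≤ δs →
    ∀ γ : ℝ → Euc 4, InG 4 δ₀ γ →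
    ∀ ξ : Euc 4, ξ ≠ 0 → Admissible δ₀ γ ξ →
      (∃! s : ℝ, s ∈ Set.Icc (-1 : ℝ) 1 ∧ ⟪iteratedDeriv 3 γ s, ξ⟫_ℝ = 0) ∧
      ∀ θ : ℝ, θ ∈ Set.Icc (-1 : ℝ) 1 → ⟪iteratedDeriv 3 γ θ, ξ⟫_ℝ = 0 →
        (∀ t ∈ Set.Icc (-1 : ℝ) 1, t ≠ θ →
          ⟪iteratedDeriv 2 γ θ, ξ⟫_ℝ < ⟪iteratedDeriv 2 γ t, ξ⟫_ℝ) ∧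
        |θ| ≤ C * δ₀ := by
  refine ⟨1 / 100, by norm_num, by norm_num, 16, by norm_num, ?_⟩
  rintro δ₀ hδ₀ hδ₀s γ ⟨hγ, -, -, -⟩ ξ hξ ⟨-, hcurv, hsmall⟩
  have hξ : 0 < ‖ξ‖ := norm_pos_iff.mpr hξ
  have hγ' (n : ℕ) : ContDiff ℝ (n + 1) γ := hγ.of_le (mod_cast le_top)
  set g : ℝ → ℝ := fun t => ⟪iteratedDeriv 3 γ t, ξ⟫_ℝ
  have hg : ∀ x ∈ Icc (-1 : ℝ) 1, HasDerivAt g ⟪iteratedDeriv 4 γ x, ξ⟫_ℝ x := fun x _ =>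
    hasDerivAt_inner_iteratedDeriv (hγ' 3) ξ x
  have hmono : StrictMonoOn g (Icc (-1) 1) :=
    strictMonoOn_of_pos_hasDerivAt hg fun x hx => by linarith [hcurv x hx]
  have hm1 : (-1 : ℝ) ∈ Icc (-1) 1 := left_mem_Icc.2 (by norm_num)
  have h1 : (1 : ℝ) ∈ Icc (-1) 1 := right_mem_Icc.2 (by norm_num)
  have h0 : (0 : ℝ) ∈ Icc (-1) 1 := ⟨by norm_num, by norm_num⟩
  have hg0 : |g 0| ≤ 8 * δ₀ * ‖ξ‖ := hsmall 3 (by norm_num) le_rfl 0 ⟨by linarith, hδ₀.le⟩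
  have hgm1 := mul_sub_le_sub_of_le_hasDerivAt hg hcurv hm1 h0 (by norm_num)
  have hg1 := mul_sub_le_sub_of_le_hasDerivAt hg hcurv h0 h1 zero_le_one
  have hsign : (0 : ℝ) ∈ Icc (g (-1)) (g 1) := by
    constructor <;> nlinarith [abs_le.mp hg0]
  refine ⟨hmono.existsUnique_eq_of_mem_Icc (fun x hx => (hg x hx).continuousAt.continuousWithinAt)
    (by norm_num) hsign, fun θ hθ hgθ => ⟨?_, ?_⟩⟩
  · exact lt_of_hasDerivAt_of_strictMonoOn
      (fun x _ => hasDerivAt_inner_iteratedDeriv (hγ' 2) ξ x) hmono hθ hgθ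
  · have hdist := mul_abs_sub_le_abs_sub_of_le_hasDerivAt hg hcurv h0 hθ
    rw [show g θ = 0 from hgθ, sub_zero, zero_sub, abs_neg] at hdist
    nlinarith
end
end

section
/- Let n ≥ 1, Ω ⊆ ℝⁿ open, I ⊆ ℝ an open interval, g, h : I → ℝⁿ smooth, y : Ω → I smooth with ⟨g(y(x)), x⟩ = 0 for all x ∈ Ω, and let e ∈ ℝⁿ be a unit vector; write ∇_e for the directional derivative along e in the variable x ∈ Ω. Suppose A, B, M₁, M₂ > 0 and constants (c_N)_{N ≥ 0} are such that for all x ∈ Ω: |⟨g'(y(x)), x⟩| ≥ A M₂; |⟨g^{(N)}(y(x)), x⟩| ≤ c_N A M₂^N and |⟨h^{(N)}(y(x)), x⟩| ≤ c_N B M₂^N for all N ≥ 1; and |⟨g^{(N)}(y(x)), e⟩| ≤ c_N A M₁ M₂^N and |⟨h^{(N)}(y(x)), e⟩| ≤ c_N B M₁ M₂^N for all N ≥ 0. Then for each N ≥ 1 there is a constant C_N, depending only on N and finitely many of the c_j, such that for all x ∈ Ω: |∇_e^N y(x)| ≤ C_N M₁^N M₂^{−1} and |∇_e^N ⟨h(y(x)),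 x⟩| ≤ C_N B M₁^N. -/
/-!
Implicit differentiation of `⟪g (y x), x⟫ = 0` gives `∇_e y = -⟪g (y x), e⟫ / ⟪g' (y x), x⟫`, so by
the chain rule `∇_e^N y` and `∇_e^N ⟪h (y x), x⟫` are polynomials, independent of the data, in
`⟪g^{(K)} (y x), e⟫`, `⟪g^{(K+1)} (y x), x⟫`, the same pairings for `h`, and `⟪g' (y x), x⟫⁻¹`.
Give these atoms the sizes `A M₁ M₂^K`, `A M₂^{K+1}`, `B M₁ M₂^K`, `B M₂^{K+1}` and `(A M₂)⁻¹`
granted by the hypotheses. Then every term of `∇_e y` has size `M₁ M₂⁻¹`, every term of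
`∇_e ⟪h (y x), x⟫` has size `B M₁`, and each further `∇_e` multiplies the size of every term by
`M₁`; bounding the polynomial term by term gives `C_N` as a polynomial in the `|c_j|`.
-/

open MeasureTheory Set
open scoped InnerProductSpace ENNReal

noncomputable section

/-- The `N`-fold iterated directional derivative `∇_e^N` along `e`. -/
def dirIter {n : ℕ} (e : Euc n) (N : ℕ) (F : Euc n → ℝ) : Euc n → ℝ :=
  (fun G : Euc n → ℝ => fun x => fderiv ℝ G x e)^[N] F

open Filter Topology

theorem hasDerivAt_iteratedDerivWithin {F : Type*} [NormedAddCommGroup F] [NormedSpace ℝ F]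
    {f : ℝ → F} {I : Set ℝ} {m : WithTop ℕ∞} {K : ℕ} (hI : IsOpen I) (hf : ContDiffOn ℝ m f I)
    (hK : (K : WithTop ℕ∞) < m) {t : ℝ} (ht : t ∈ I) :
    HasDerivAt (iteratedDerivWithin K f I) (iteratedDerivWithin (K + 1) f I t) t := by
  have := ((hf.differentiableOn_iteratedDerivWithin hK hI.uniqueDiffOn t ht).differentiableAt
    (hI.mem_nhds ht)).hasDerivAt
  rwa [iteratedDerivWithin_succ, derivWithin_of_isOpen hI ht]

section InnerProductSpace

variable {E : Type*} [NormedAddCommGroup E] [InnerProductSpace ℝ E]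

theorem exists_hasFDerivAt_inner_iteratedDerivWithin_comp {f : ℝ → E} {I : Set ℝ}
    {m : WithTop ℕ∞} {K : ℕ} (hI : IsOpen I) (hf : ContDiffOn ℝ m f I)
    (hK : (K : WithTop ℕ∞) < m) {y : E → ℝ} {x : E} (hy : DifferentiableAt ℝ y x)
    (hyx : y x ∈ I) {v : E → E} {v' : E →L[ℝ] E} (hv : HasFDerivAt v v' x) (w : E) :
    ∃ L : E →L[ℝ] ℝ,
      HasFDerivAt (fun x' => ⟪iteratedDerivWithin K f I (y x'), v x'⟫_ℝ) L x ∧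
      L w = ⟪iteratedDerivWithin (K + 1) f I (y x), v x⟫_ℝ * fderiv ℝ y x w +
        ⟪iteratedDerivWithin K f I (y x), v' w⟫_ℝ := by
  have hcurve := (hasDerivAt_iteratedDerivWithin hI hf hK hyx).hasFDerivAt.comp x hy.hasFDerivAt
  refine ⟨_, hcurve.inner ℝ hv, ?_⟩
  simp [real_inner_smul_left, add_comm, mul_comm]

end InnerProductSpace

theorem dirIter_succ_apply {n : ℕ} (e : Euc n) (N : ℕ) (F : Euc n → ℝ) (x : Euc n) :
    dirIter e (N + 1) F x = fderiv ℝ (dirIter e N F) x e :=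
  congrFun (Function.iterate_succ_apply' _ N F) x

theorem Set.EqOn.dirIter {n : ℕ} {Ω : Set (Euc n)} (hΩ : IsOpen Ω) {e : Euc n} {ι : Type*}
    {f : ι → Euc n → ℝ} {D : ι → ι} (hD : ∀ i, ∀ x ∈ Ω, fderiv ℝ (f i) x e = f (D i) x)
    {F : Euc n → ℝ} {i : ι} (hF : EqOn F (f i) Ω) (m : ℕ) :
    EqOn (dirIter e m F) (f (D^[m] i)) Ω := by
  induction m with
  | zero => exact hF
  | succ m ih =>
    intro x hx
    rw [dirIter_succ_apply, Function.iterate_succ_apply',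
      (ih.eventuallyEq_of_mem (hΩ.mem_nhds hx)).fderiv_eq, hD _ x hx]

namespace ImplicitDeriv

/-- `gx K` and `hx K` stand for `⟪g^{(K+1)}(y x), x⟫` and `⟪h^{(K+1)}(y x), x⟫`: the pairings of
`g` and `h` themselves with `x` are not bounded by hypothesis. -/
inductive Expr
  | ge (K : ℕ)
  | gx (K : ℕ)
  | he (K : ℕ)
  | hx (K : ℕ)
  | inv
  | neg (P : Expr)
  | add (P Q : Expr)
  | mul (P Q : Expr)

namespace Expr

section Eval

variable {E : Type*} [NormedAddCommGroup E] [InnerProductSpace ℝ E]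
  (g h : ℝ → E) (I : Set ℝ) (y : E → ℝ) (e : E)

def eval : Expr → E → ℝ
  | .ge K => fun x => ⟪iteratedDerivWithin K g I (y x), e⟫_ℝ
  | .gx K => fun x => ⟪iteratedDerivWithin (K + 1) g I (y x), x⟫_ℝ
  | .he K => fun x => ⟪iteratedDerivWithin K h I (y x), e⟫_ℝ
  | .hx K => fun x => ⟪iteratedDerivWithin (K + 1) h I (y x), x⟫_ℝ
  | .inv => fun x => (⟪iteratedDerivWithin 1 g I (y x), x⟫_ℝ)⁻¹
  | .neg P => -eval P
  | .add P Q => eval P + eval Q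
  | .mul P Q => eval P * eval Q

end Eval

def dy : Expr := .neg (.mul (.ge 0) .inv)

def dhx : Expr := .add (.mul (.hx 0) dy) (.he 0)

def dirDeriv : Expr → Expr
  | .ge K => .mul (.ge (K + 1)) dy
  | .gx K => .add (.mul (.gx (K + 1)) dy) (.ge (K + 1))
  | .he K => .mul (.he (K + 1)) dy
  | .hx K => .add (.mul (.hx (K + 1)) dy) (.he (K + 1))
  | .inv => .neg (.mul (.add (.mul (.gx 1) dy) (.ge 1)) (.mul .inv .inv))
  | .neg P => .neg (dirDeriv P)
  | .add P Q => .add (dirDeriv P) (dirDeriv Q)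
  | .mul P Q => .add (.mul (dirDeriv P) Q) (.mul P (dirDeriv Q))

def bound (c : ℕ → ℝ) : Expr → ℝ
  | .ge K | .he K => |c K|
  | .gx K | .hx K => |c (K + 1)|
  | .inv => 1
  | .neg P => bound c P
  | .add P Q => bound c P + bound c Q
  | .mul P Q => bound c P * bound c Q

inductive HasScale (A B M₁ M₂ : ℝ) : Expr → ℝ → Prop
  | ge (K : ℕ) : HasScale A B M₁ M₂ (.ge K) (A * M₁ * M₂ ^ K)
  | gx (K : ℕ) : HasScale A B M₁ M₂ (.gx K) (A * M₂ ^ (K + 1))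
  | he (K : ℕ) : HasScale A B M₁ M₂ (.he K) (B * M₁ * M₂ ^ K)
  | hx (K : ℕ) : HasScale A B M₁ M₂ (.hx K) (B * M₂ ^ (K + 1))
  | inv : HasScale A B M₁ M₂ .inv (A * M₂)⁻¹
  | neg {P s} : HasScale A B M₁ M₂ P s → HasScale A B M₁ M₂ (.neg P) s
  | add {P Q s} : HasScale A B M₁ M₂ P s → HasScale A B M₁ M₂ Q s → HasScale A B M₁ M₂ (.add P Q) s
  | mul {P Q s t} : HasScale A B M₁ M₂ P s → HasScale A B M₁ M₂ Q t →
      HasScale A B M₁ M₂ (.mul P Q) (s * t)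

namespace HasScale

variable {A B M₁ M₂ : ℝ} {P : Expr} {s : ℝ}

theorem congr {t : ℝ} (hP : HasScale A B M₁ M₂ P s) (hst : s = t) : HasScale A B M₁ M₂ P t :=
  hst ▸ hP

theorem dy (hA : A ≠ 0) : HasScale A B M₁ M₂ Expr.dy (M₁ * M₂⁻¹) :=
  ((ge 0).mul inv).neg.congr (by field_simp)

theorem dhx (hA : A ≠ 0) (hM₂ : M₂ ≠ 0) : HasScale A B M₁ M₂ Expr.dhx (B * M₁) :=
  (((hx 0).mul (dy hA)).congr (by field_simp; ring)).add ((he 0).congr (by ring))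

theorem dirDeriv (hA : A ≠ 0) (hM₂ : M₂ ≠ 0) (hP : HasScale A B M₁ M₂ P s) :
    HasScale A B M₁ M₂ P.dirDeriv (s * M₁) := by
  induction hP with
  | ge K => exact ((ge (K + 1)).mul (dy hA)).congr (by field_simp; ring)
  | gx K =>
    exact (((gx (K + 1)).mul (dy hA)).congr (by field_simp; ring)).add
      ((ge (K + 1)).congr (by ring))
  | he K => exact ((he (K + 1)).mul (dy hA)).congr (by field_simp; ring)
  | hx K =>
    exact (((hx (K + 1)).mul (dy hA)).congr (by field_simp; ring)).add
      ((he (K + 1)).congr (by ring))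
  | inv =>
    have hdx : HasScale A B M₁ M₂ (.add (.mul (.gx 1) Expr.dy) (.ge 1)) (A * M₁ * M₂ ^ 1) :=
      (((gx 1).mul (dy hA)).congr (by field_simp; ring)).add (ge 1)
    exact (hdx.mul (inv.mul inv)).neg.congr (by field_simp)
  | neg _ ih => exact ih.neg
  | add _ _ ihP ihQ => exact ihP.add ihQ
  | mul hP hQ ihP ihQ => exact ((ihP.mul hQ).congr (by ring)).add ((hP.mul ihQ).congr (by ring))

theorem iterate_dirDeriv (hA : A ≠ 0) (hM₂ : M₂ ≠ 0) (hP : HasScale A B M₁ M₂ P s) (m : ℕ) :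
    HasScale A B M₁ M₂ (Expr.dirDeriv^[m] P) (s * M₁ ^ m) := by
  induction m with
  | zero => simpa using hP
  | succ m ih =>
    rw [Function.iterate_succ_apply']
    exact (ih.dirDeriv hA hM₂).congr (by ring)

end HasScale

section Analysis

variable {E : Type*} [NormedAddCommGroup E] [InnerProductSpace ℝ E]
  {g h : ℝ → E} {I : Set ℝ} {y : E → ℝ} {e x : E}

structure DerivBounds (c : ℕ → ℝ) (A B M₁ M₂ : ℝ) (g h : ℝ → E) (I : Set ℝ) (e x : E) (t : ℝ) :
    Prop where
  g_x_lower : A * M₂ ≤ |⟪iteratedDerivWithin 1 g I t, x⟫_ℝ|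
  g_x : ∀ K : ℕ, 1 ≤ K → |⟪iteratedDerivWithin K g I t, x⟫_ℝ| ≤ c K * A * M₂ ^ K
  h_x : ∀ K : ℕ, 1 ≤ K → |⟪iteratedDerivWithin K h I t, x⟫_ℝ| ≤ c K * B * M₂ ^ K
  g_e : ∀ K : ℕ, |⟪iteratedDerivWithin K g I t, e⟫_ℝ| ≤ c K * A * M₁ * M₂ ^ K
  h_e : ∀ K : ℕ, |⟪iteratedDerivWithin K h I t, e⟫_ℝ| ≤ c K * B * M₁ * M₂ ^ K

theorem abs_eval_le {c : ℕ → ℝ} {A B M₁ M₂ : ℝ} (hA : 0 < A) (hB : 0 ≤ B) (hM₁ : 0 ≤ M₁)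
    (hM₂ : 0 < M₂) (hb : DerivBounds c A B M₁ M₂ g h I e x (y x)) {P : Expr} {s : ℝ}
    (hP : HasScale A B M₁ M₂ P s) : |P.eval g h I y e x| ≤ bound c P * s := by
  have atom {u a b : ℝ} (hu : u ≤ a * b) (hb : 0 ≤ b) : u ≤ |a| * b :=
    hu.trans (mul_le_mul_of_nonneg_right (le_abs_self a) hb)
  induction hP with
  | ge K => exact atom (by simpa only [eval, mul_assoc] using hb.g_e K) (by positivity)
  | gx K =>
    exact atom (by simpa only [eval, mul_assoc] using hb.g_x (K + 1) K.succ_pos) (by positivity)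
  | he K => exact atom (by simpa only [eval, mul_assoc] using hb.h_e K) (by positivity)
  | hx K =>
    exact atom (by simpa only [eval, mul_assoc] using hb.h_x (K + 1) K.succ_pos) (by positivity)
  | inv =>
    simp only [eval, bound, abs_inv, one_mul]
    exact inv_anti₀ (by positivity) hb.g_x_lower
  | neg _ ih => simpa only [eval, bound, Pi.neg_apply, abs_neg] using ih
  | add _ _ ihP ihQ =>
    simp only [eval, bound, Pi.add_apply, add_mul]
    exact (abs_add_le _ _).trans (add_le_add ihP ihQ)
  | mul _ _ ihP ihQ =>
    simp only [eval, bound, Pi.mul_apply, abs_mul]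
    calc _ ≤ _ := mul_le_mul ihP ihQ (abs_nonneg _) ((abs_nonneg _).trans ihP)
      _ = _ := by ring

theorem fderiv_apply_eq_eval_dy (hI : IsOpen I) (hg : ContDiffOn ℝ (⊤ : ℕ∞) g I)
    (hy : DifferentiableAt ℝ y x) (hyx : y x ∈ I)
    (horth : ∀ᶠ x' in 𝓝 x, ⟪g (y x'), x'⟫_ℝ = 0)
    (hne : ⟪iteratedDerivWithin 1 g I (y x), x⟫_ℝ ≠ 0) :
    fderiv ℝ y x e = dy.eval g h I y e x := by
  obtain ⟨L, hL, hLe⟩ := exists_hasFDerivAt_inner_iteratedDerivWithin_comp (K := 0) hI hg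
    (by simp) hy hyx (hasFDerivAt_id x) e
  have hL0 : L = 0 := by
    simp only [iteratedDerivWithin_zero, id] at hL
    exact hL.unique ((hasFDerivAt_const 0 x).congr_of_eventuallyEq horth)
  simp only [hL0, zero_apply, ContinuousLinearMap.id_apply, id, zero_add,
    iteratedDerivWithin_zero] at hLe
  simp only [dy, eval, Pi.neg_apply, Pi.mul_apply, iteratedDerivWithin_zero]
  field_simp
  linarith

theorem exists_hasFDerivAt_eval (hI : IsOpen I) (hg : ContDiffOn ℝ (⊤ : ℕ∞) g I)
    (hh : ContDiffOn ℝ (⊤ : ℕ∞) h I) (hy : DifferentiableAt ℝ y x) (hyx : y x ∈ I)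
    (hdy : fderiv ℝ y x e = dy.eval g h I y e x)
    (hne : ⟪iteratedDerivWithin 1 g I (y x), x⟫_ℝ ≠ 0) (P : Expr) :
    ∃ L : E →L[ℝ] ℝ, HasFDerivAt (P.eval g h I y e) L x ∧ L e = P.dirDeriv.eval g h I y e x := by
  have hK (K : ℕ) : (K : WithTop ℕ∞) < ((⊤ : ℕ∞) : WithTop ℕ∞) := by
    exact_mod_cast WithTop.coe_lt_top (K : ℕ)
  have pair_e {f : ℝ → E} (hf : ContDiffOn ℝ (⊤ : ℕ∞) f I) (K : ℕ) :=
    exists_hasFDerivAt_inner_iteratedDerivWithin_comp hI hf (hK K) hy hyx (hasFDerivAt_const e x) e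
  have pair_x {f : ℝ → E} (hf : ContDiffOn ℝ (⊤ : ℕ∞) f I) (K : ℕ) :=
    exists_hasFDerivAt_inner_iteratedDerivWithin_comp hI hf (hK K) hy hyx (hasFDerivAt_id x) e
  simp only [dy, eval] at hdy
  induction P with
  | ge K =>
    obtain ⟨L, hL, hLe⟩ := pair_e hg K
    exact ⟨L, hL, by simp [hLe, hdy, eval, dirDeriv, dy]⟩
  | gx K =>
    obtain ⟨L, hL, hLe⟩ := pair_x hg (K + 1)
    exact ⟨L, hL, by simp [hLe, hdy, eval, dirDeriv, dy]⟩
  | he K =>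
    obtain ⟨L, hL, hLe⟩ := pair_e hh K
    exact ⟨L, hL, by simp [hLe, hdy, eval, dirDeriv, dy]⟩
  | hx K =>
    obtain ⟨L, hL, hLe⟩ := pair_x hh (K + 1)
    exact ⟨L, hL, by simp [hLe, hdy, eval, dirDeriv, dy]⟩
  | inv =>
    obtain ⟨L, hL, hLe⟩ := pair_x hg 1
    refine ⟨_, (hasDerivAt_inv hne).comp_hasFDerivAt
      (f := fun x' => ⟪iteratedDerivWithin 1 g I (y x'), x'⟫_ℝ) x hL, ?_⟩
    simp only [eval, dirDeriv, dy, hLe, hdy, neg_smul, neg_apply, smul_apply, smul_eq_mul, id_eq,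
      ContinuousLinearMap.id_apply, Pi.neg_apply, Pi.add_apply, Pi.mul_apply]
    ring
  | neg P ih =>
    obtain ⟨L, hL, hLe⟩ := ih
    exact ⟨-L, hL.neg, by simp [eval, dirDeriv, hLe]⟩
  | add P Q ihP ihQ =>
    obtain ⟨L₁, hL₁, hL₁e⟩ := ihP
    obtain ⟨L₂, hL₂, hL₂e⟩ := ihQ
    exact ⟨L₁ + L₂, hL₁.add hL₂, by simp [eval, dirDeriv, hL₁e, hL₂e]⟩
  | mul P Q ihP ihQ =>
    obtain ⟨L₁, hL₁, hL₁e⟩ := ihP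
    obtain ⟨L₂, hL₂, hL₂e⟩ := ihQ
    refine ⟨_, hL₁.mul hL₂, ?_⟩
    simp only [eval, dirDeriv, add_apply, smul_apply, smul_eq_mul, hL₁e, hL₂e, Pi.add_apply,
      Pi.mul_apply]
    ring

theorem fderiv_eval_apply (hI : IsOpen I) (hg : ContDiffOn ℝ (⊤ : ℕ∞) g I)
    (hh : ContDiffOn ℝ (⊤ : ℕ∞) h I) (hy : DifferentiableAt ℝ y x) (hyx : y x ∈ I)
    (hdy : fderiv ℝ y x e = dy.eval g h I y e x)
    (hne : ⟪iteratedDerivWithin 1 g I (y x), x⟫_ℝ ≠ 0) (P : Expr) :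
    fderiv ℝ (P.eval g h I y e) x e = P.dirDeriv.eval g h I y e x := by
  obtain ⟨L, hL, hLe⟩ := exists_hasFDerivAt_eval hI hg hh hy hyx hdy hne P
  rw [hL.fderiv, hLe]

theorem fderiv_inner_apply_eq_eval_dhx (hI : IsOpen I) (hh : ContDiffOn ℝ (⊤ : ℕ∞) h I)
    (hy : DifferentiableAt ℝ y x) (hyx : y x ∈ I) (hdy : fderiv ℝ y x e = dy.eval g h I y e x) :
    fderiv ℝ (fun x' => ⟪h (y x'), x'⟫_ℝ) x e = dhx.eval g h I y e x := by
  obtain ⟨L, hL, hLe⟩ := exists_hasFDerivAt_inner_iteratedDerivWithin_comp (K := 0) hI hh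
    (by simp) hy hyx (hasFDerivAt_id x) e
  simp only [iteratedDerivWithin_zero, id] at hL hLe
  rw [hL.fderiv, hLe, hdy]
  simp [dhx, eval]

end Analysis

end Expr

end ImplicitDeriv

open ImplicitDeriv

theorem statement17_general (n : ℕ) (c : ℕ → ℝ) (N : ℕ) (hN : 1 ≤ N) :
    ∃ C : ℝ, 0 < C ∧
    ∀ (Ω : Set (Euc n)), IsOpen Ω →
    ∀ c₁ c₂ : ℝ,
    ∀ g h : ℝ → Euc n,
      ContDiffOn ℝ (⊤ : ℕ∞) g (Set.Ioo c₁ c₂) →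
      ContDiffOn ℝ (⊤ : ℕ∞) h (Set.Ioo c₁ c₂) →
    ∀ y : Euc n → ℝ, ContDiffOn ℝ (⊤ : ℕ∞) y Ω → (∀ x ∈ Ω, y x ∈ Set.Ioo c₁ c₂) →
      (∀ x ∈ Ω, ⟪g (y x), x⟫_ℝ = 0) →
    ∀ e : Euc n, ‖e‖ = 1 →
    ∀ A B M₁ M₂ : ℝ, 0 < A → 0 < B → 0 < M₁ → 0 < M₂ →
      (∀ x ∈ Ω, A * M₂ ≤ |⟪iteratedDerivWithin 1 g (Set.Ioo c₁ c₂) (y x), x⟫_ℝ|) →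
      (∀ K : ℕ, 1 ≤ K → ∀ x ∈ Ω,
        |⟪iteratedDerivWithin K g (Set.Ioo c₁ c₂) (y x), x⟫_ℝ| ≤ c K * A * M₂ ^ K) →
      (∀ K : ℕ, 1 ≤ K → ∀ x ∈ Ω,
        |⟪iteratedDerivWithin K h (Set.Ioo c₁ c₂) (y x), x⟫_ℝ| ≤ c K * B * M₂ ^ K) →
      (∀ K : ℕ, ∀ x ∈ Ω,
        |⟪iteratedDerivWithin K g (Set.Ioo c₁ c₂) (y x), e⟫_ℝ| ≤ c K * A * M₁ * M₂ ^ K) →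
      (∀ K : ℕ, ∀ x ∈ Ω,
        |⟪iteratedDerivWithin K h (Set.Ioo c₁ c₂) (y x), e⟫_ℝ| ≤ c K * B * M₁ * M₂ ^ K) →
    ∀ x ∈ Ω,
      |dirIter e N y x| ≤ C * M₁ ^ N * M₂⁻¹ ∧
      |dirIter e N (fun x' => ⟪h (y x'), x'⟫_ℝ) x| ≤ C * B * M₁ ^ N := by
  obtain ⟨m, rfl⟩ := Nat.exists_eq_add_of_le' hN
  set C₁ := Expr.bound c (Expr.dirDeriv^[m] Expr.dy)
  set C₂ := Expr.bound c (Expr.dirDeriv^[m] Expr.dhx)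
  refine ⟨max 1 (max C₁ C₂), lt_max_of_lt_left one_pos, ?_⟩
  intro Ω hΩ c₁ c₂ g h hg hh y hy hyI horth e _ A B M₁ M₂ hA hB hM₁ hM₂ hlow hgx hhx hge hhe x hx
  set ev := fun P : Expr => P.eval g h (Ioo c₁ c₂) y e
  have hyd (x) (hx : x ∈ Ω) : DifferentiableAt ℝ y x :=
    (hy.contDiffAt (hΩ.mem_nhds hx)).differentiableAt (by simp)
  have hne (x) (hx : x ∈ Ω) : ⟪iteratedDerivWithin 1 g (Ioo c₁ c₂) (y x), x⟫_ℝ ≠ 0 :=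
    abs_pos.mp ((mul_pos hA hM₂).trans_le (hlow x hx))
  have hdy : EqOn (fun x => fderiv ℝ y x e) (ev Expr.dy) Ω := fun x hx =>
    Expr.fderiv_apply_eq_eval_dy isOpen_Ioo hg (hyd x hx) (hyI x hx)
      (eventually_of_mem (hΩ.mem_nhds hx) horth) (hne x hx)
  have hdhx : EqOn (fun x => fderiv ℝ (fun x' => ⟪h (y x'), x'⟫_ℝ) x e) (ev Expr.dhx) Ω :=
    fun x hx => Expr.fderiv_inner_apply_eq_eval_dhx isOpen_Ioo hh (hyd x hx) (hyI x hx) (hdy hx)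
  have hD (P : Expr) (x) (hx : x ∈ Ω) : fderiv ℝ (ev P) x e = ev P.dirDeriv x :=
    Expr.fderiv_eval_apply isOpen_Ioo hg hh (hyd x hx) (hyI x hx) (hdy hx) (hne x hx) P
  have hC₁ : C₁ ≤ max 1 (max C₁ C₂) := le_max_of_le_right (le_max_left _ _)
  have hC₂ : C₂ ≤ max 1 (max C₁ C₂) := le_max_of_le_right (le_max_right _ _)
  have abs_dirIter_le {F : Euc n → ℝ} {P : Expr} {s : ℝ}
      (hF : EqOn (fun x => fderiv ℝ F x e) (ev P) Ω) (hP : Expr.HasScale A B M₁ M₂ P s) :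
      |dirIter e (m + 1) F x| ≤ Expr.bound c (Expr.dirDeriv^[m] P) * (s * M₁ ^ m) := by
    -- `dirIter e (m + 1) F` is definitionally `dirIter e m (∇_e F)`
    rw [show dirIter e (m + 1) F x = _ from hF.dirIter hΩ hD m hx]
    exact Expr.abs_eval_le hA hB.le hM₁.le hM₂
      ⟨hlow x hx, (hgx · · x hx), (hhx · · x hx), (hge · x hx), (hhe · x hx)⟩
      (hP.iterate_dirDeriv hA.ne' hM₂.ne' m)
  constructor
  · calc _ ≤ C₁ * (M₁ * M₂⁻¹ * M₁ ^ m) := abs_dirIter_le hdy (.dy hA.ne')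
      _ ≤ max 1 (max C₁ C₂) * (M₁ * M₂⁻¹ * M₁ ^ m) := by gcongr
      _ = _ := by ring
  · calc _ ≤ C₂ * (B * M₁ * M₁ ^ m) := abs_dirIter_le hdhx (.dhx hA.ne' hM₂.ne')
      _ ≤ max 1 (max C₁ C₂) * (B * M₁ * M₁ ^ m) := by gcongr
      _ = _ := by ring

/-- derivative bounds for implicitly defined functions
(Lemma B.1 of the paper). -/
theorem statement17 (n : ℕ) (hn : 1 ≤ n) (c : ℕ → ℝ) (N : ℕ) (hN : 1 ≤ N) :
    ∃ C : ℝ, 0 < C ∧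
    ∀ (Ω : Set (Euc n)), IsOpen Ω →
    ∀ c₁ c₂ : ℝ,
    ∀ g h : ℝ → Euc n,
      ContDiffOn ℝ (⊤ : ℕ∞) g (Set.Ioo c₁ c₂) →
      ContDiffOn ℝ (⊤ : ℕ∞) h (Set.Ioo c₁ c₂) →
    ∀ y : Euc n → ℝ, ContDiffOn ℝ (⊤ : ℕ∞) y Ω → (∀ x ∈ Ω, y x ∈ Set.Ioo c₁ c₂) →
      (∀ x ∈ Ω, ⟪g (y x), x⟫_ℝ = 0) →
    ∀ e : Euc n, ‖e‖ = 1 →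
    ∀ A B M₁ M₂ : ℝ, 0 < A → 0 < B → 0 < M₁ → 0 < M₂ →
      (∀ x ∈ Ω, A * M₂ ≤ |⟪iteratedDerivWithin 1 g (Set.Ioo c₁ c₂) (y x), x⟫_ℝ|) →
      (∀ K : ℕ, 1 ≤ K → ∀ x ∈ Ω,
        |⟪iteratedDerivWithin K g (Set.Ioo c₁ c₂) (y x), x⟫_ℝ| ≤ c K * A * M₂ ^ K) →
      (∀ K : ℕ, 1 ≤ K → ∀ x ∈ Ω,
        |⟪iteratedDerivWithin K h (Set.Ioo c₁ c₂) (y x), x⟫_ℝ| ≤ c K * B * M₂ ^ K) →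
      (∀ K : ℕ, ∀ x ∈ Ω,
        |⟪iteratedDerivWithin K g (Set.Ioo c₁ c₂) (y x), e⟫_ℝ| ≤ c K * A * M₁ * M₂ ^ K) →
      (∀ K : ℕ, ∀ x ∈ Ω,
        |⟪iteratedDerivWithin K h (Set.Ioo c₁ c₂) (y x), e⟫_ℝ| ≤ c K * B * M₁ * M₂ ^ K) →
    ∀ x ∈ Ω,
      |dirIter e N y x| ≤ C * M₁ ^ N * M₂⁻¹ ∧
      |dirIter e N (fun x' => ⟪h (y x'), x'⟫_ℝ) x| ≤ C * B * M₁ ^ N :=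
  statement17_general n c N hN
end
end
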